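/- arXiv:1705.00331 — 8 statements merged into one kernel-verified Lean document; each statement's English description precedes it below -/
import Mathlib

section
/- For any d×d real positive semi-definite symmetric matrix A and any d×d real singular symmetric matrix B such that A + B is also positive semi-definite, the function t ↦ (det(A + tB))^(1/(d-1)) is concave on the interval [0,1]. -/
/-!
`B` has a unit eigenvector with eigenvalue `0`. In an orthonormal eigenbasis of `B` listing this
vector last, all the matrices `A + t • B` share their last row and column, so taking the Schur
complement of the last diagonal entry `α` gives `det (A + t • B) = α * det (C + t • D)` with
`C + t • D` positive semidefinite of size `d - 1` (if `α = 0` the last column vanishes and the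
determinant is identically `0`). It remains to see that `X ↦ det X ^ (1 / n)` is concave on
positive semidefinite `n × n` matrices, i.e. Minkowski's determinant inequality
`det X ^ (1 / n) + det Y ^ (1 / n) ≤ det (X + Y) ^ (1 / n)`. Writing `X = Lᴴ * L` reduces it to
`X = 1`, where it is the superadditivity `1 + (∏ μ) ^ (1 / n) ≤ (∏ (1 + μ)) ^ (1 / n)` of the
geometric mean over the eigenvalues `μ` of `Y`, which is AM-GM applied to `1 / (1 + μ)` and
`μ / (1 + μ)`.
-/

open Matrix

open scoped MatrixOrder

namespace Real

variable {ι : Type*} [Fintype ι] [Nonempty ι]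

lemma prod_rpow_inv_card_add_prod_rpow_inv_card_le_one {a b : ι → ℝ} (ha : ∀ i, 0 ≤ a i)
    (hb : ∀ i, 0 ≤ b i) (hab : ∀ i, a i + b i = 1) :
    (∏ i, a i) ^ (Fintype.card ι : ℝ)⁻¹ + (∏ i, b i) ^ (Fintype.card ι : ℝ)⁻¹ ≤ 1 := by
  have hn : (0 : ℝ) < Fintype.card ι := by exact_mod_cast Fintype.card_pos
  have amgm (z : ι → ℝ) (hz : ∀ i, 0 ≤ z i) :
      (∏ i, z i) ^ (Fintype.card ι : ℝ)⁻¹ ≤ (∑ i, z i) / Fintype.card ι := by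
    simpa using geom_mean_le_arith_mean Finset.univ (fun _ ↦ 1) z (by simp) (by simpa using hn)
      (fun i _ ↦ hz i)
  calc _ ≤ (∑ i, a i) / Fintype.card ι + (∑ i, b i) / Fintype.card ι :=
        add_le_add (amgm a ha) (amgm b hb)
    _ = 1 := by
      rw [← add_div, ← Finset.sum_add_distrib]
      simp [hab, hn.ne']

lemma one_add_prod_rpow_inv_card_le {μ : ι → ℝ} (hμ : ∀ i, 0 ≤ μ i) :
    1 + (∏ i, μ i) ^ (Fintype.card ι : ℝ)⁻¹ ≤ (∏ i, (1 + μ i)) ^ (Fintype.card ι : ℝ)⁻¹ := by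
  have h1μ (i : ι) : 0 < 1 + μ i := by linarith [hμ i]
  have hQ : 0 < ∏ i, (1 + μ i) := Finset.prod_pos fun i _ ↦ h1μ i
  have key := prod_rpow_inv_card_add_prod_rpow_inv_card_le_one (a := fun i ↦ (1 + μ i)⁻¹)
    (b := fun i ↦ μ i * (1 + μ i)⁻¹) (fun i ↦ (inv_pos.2 (h1μ i)).le)
    (fun i ↦ mul_nonneg (hμ i) (inv_pos.2 (h1μ i)).le)
    (fun i ↦ by field_simp [(h1μ i).ne'])
  rw [Finset.prod_mul_distrib, Finset.prod_inv_distrib,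
    mul_rpow (Finset.prod_nonneg fun i _ ↦ hμ i) (inv_nonneg.2 hQ.le), inv_rpow hQ.le,
    ← one_add_mul, ← div_eq_mul_inv, div_le_one (rpow_pos_of_pos hQ _)] at key
  simpa only [add_comm] using key

end Real

namespace Matrix

variable {ι : Type*} [Fintype ι] [DecidableEq ι]

lemma IsHermitian.fromBlocks_toBlocks {m n : Type*} {X : Matrix (m ⊕ n) (m ⊕ n) ℝ}
    (hX : X.IsHermitian) :
    Matrix.fromBlocks X.toBlocks₁₁ X.toBlocks₁₂ X.toBlocks₁₂ᴴ X.toBlocks₂₂ = X := by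
  rw [← Matrix.fromBlocks_toBlocks X] at hX
  rw [(isHermitian_fromBlocks_iff.1 hX).2.1, Matrix.fromBlocks_toBlocks]

lemma IsHermitian.conjTranspose_eigenvectorUnitary_mul_mul {M : Matrix ι ι ℝ}
    (hM : M.IsHermitian) :
    (hM.eigenvectorUnitary : Matrix ι ι ℝ)ᴴ * M * hM.eigenvectorUnitary
      = diagonal hM.eigenvalues := by
  have h := hM.conjStarAlgAut_star_eigenvectorUnitary
  rwa [Unitary.conjStarAlgAut_star_apply] at h

lemma PosSemidef.det_eq_zero_of_diag_eq_zero {X : Matrix ι ι ℝ} (hX : X.PosSemidef) {i : ι}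
    (hi : X i i = 0) : X.det = 0 := by
  have hXe : X *ᵥ Pi.single i 1 = 0 := (hX.dotProduct_mulVec_zero_iff _).1 (by simpa using hi)
  exact exists_mulVec_eq_zero_iff.1 ⟨_, by simp, hXe⟩

lemma IsHermitian.det_one_add {M : Matrix ι ι ℝ} (hM : M.IsHermitian) :
    (1 + M).det = ∏ i, (1 + hM.eigenvalues i) := by
  set U := hM.eigenvectorUnitary
  have hconj : 1 + M = Unitary.conjStarAlgAut ℝ _ U (diagonal fun i ↦ 1 + hM.eigenvalues i) := by
    conv_lhs => rw [hM.spectral_theorem]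
    rw [← map_one (Unitary.conjStarAlgAut ℝ _ U), ← map_add, ← diagonal_one, diagonal_add]
    rfl
  rw [hconj, Unitary.conjStarAlgAut_apply, det_mul_right_comm, Unitary.mul_star_self_of_mem U.2,
    Matrix.one_mul, det_diagonal]

lemma PosDef.det_rpow_add_det_rpow_le [Nonempty ι] {X Y : Matrix ι ι ℝ} (hX : X.PosDef)
    (hY : Y.PosSemidef) :
    X.det ^ (Fintype.card ι : ℝ)⁻¹ + Y.det ^ (Fintype.card ι : ℝ)⁻¹
      ≤ (X + Y).det ^ (Fintype.card ι : ℝ)⁻¹ := by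
  set r : ℝ := (Fintype.card ι : ℝ)⁻¹
  obtain ⟨L, rfl⟩ := CStarAlgebra.nonneg_iff_eq_star_mul_self.mp hX.posSemidef.nonneg
  have hL : IsUnit L := by
    rw [isUnit_iff_isUnit_det, isUnit_iff_ne_zero]
    intro h
    simpa [det_mul, h] using hX.det_pos
  have hdet (Z : Matrix ι ι ℝ) : (star L * Z * L).det = (star L * L).det * Z.det := by
    simp only [det_mul]; ring
  set M := (L⁻¹)ᴴ * Y * L⁻¹
  have hM : M.PosSemidef := hY.conjTranspose_mul_mul_same _
  have hYM : Y = star L * M * L := by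
    have hLL : L⁻¹ * L = 1 := nonsing_inv_mul L ((isUnit_iff_isUnit_det L).1 hL)
    calc Y = (L⁻¹ * L)ᴴ * Y * (L⁻¹ * L) := by simp [hLL]
      _ = star L * M * L := by
        simp only [M, conjTranspose_mul, star_eq_conjTranspose, Matrix.mul_assoc]
  have hXY : star L * L + Y = star L * (1 + M) * L := by
    rw [hYM, Matrix.mul_add, Matrix.add_mul, Matrix.mul_one]
  have hμ := hM.eigenvalues_nonneg
  have hXr : 0 ≤ (star L * L).det ^ r := Real.rpow_nonneg hX.det_pos.le r
  calc _ = (star L * L).det ^ r * (1 + M.det ^ r) := by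
        rw [hYM, hdet, Real.mul_rpow hX.det_pos.le hM.det_nonneg]; ring
    _ ≤ (star L * L).det ^ r * (1 + M).det ^ r := by
        gcongr
        rw [hM.1.det_one_add, hM.1.det_eq_prod_eigenvalues]
        simpa using Real.one_add_prod_rpow_inv_card_le hμ
    _ = _ := by
        have h1M : 0 ≤ (1 + M).det := by
          rw [hM.1.det_one_add]
          exact Finset.prod_nonneg fun i _ ↦ by linarith [hμ i]
        rw [hXY, hdet, Real.mul_rpow hX.det_pos.le h1M]

lemma PosSemidef.det_rpow_add_det_rpow_le [Nonempty ι] {X Y : Matrix ι ι ℝ} (hX : X.PosSemidef)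
    (hY : Y.PosSemidef) :
    X.det ^ (Fintype.card ι : ℝ)⁻¹ + Y.det ^ (Fintype.card ι : ℝ)⁻¹
      ≤ (X + Y).det ^ (Fintype.card ι : ℝ)⁻¹ := by
  by_cases hXdet : X.det = 0
  · by_cases hYdet : Y.det = 0
    · rw [hXdet, hYdet, Real.zero_rpow (by positivity), zero_add]
      exact Real.rpow_nonneg (hX.add hY).det_nonneg _
    · simpa only [add_comm] using
        (hY.posDef_iff_det_ne_zero.2 hYdet).det_rpow_add_det_rpow_le hX
  · exact (hX.posDef_iff_det_ne_zero.2 hXdet).det_rpow_add_det_rpow_le hY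

omit [Fintype ι] [DecidableEq ι] in
lemma convex_setOf_posSemidef : Convex ℝ {X : Matrix ι ι ℝ | X.PosSemidef} :=
  fun _ hX _ hY _ _ ha hb _ ↦ (hX.smul ha).add (hY.smul hb)

lemma concaveOn_det_rpow_inv_card :
    ConcaveOn ℝ {X : Matrix ι ι ℝ | X.PosSemidef} fun X ↦ X.det ^ (Fintype.card ι : ℝ)⁻¹ := by
  cases isEmpty_or_nonempty ι
  · simpa using concaveOn_const (1 : ℝ) convex_setOf_posSemidef
  refine ⟨convex_setOf_posSemidef, fun X hX Y hY a b ha hb hab ↦ ?_⟩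
  have hsmul {c : ℝ} (hc : 0 ≤ c) (Z : Matrix ι ι ℝ) (hZ : Z.PosSemidef) :
      (c • Z).det ^ (Fintype.card ι : ℝ)⁻¹ = c * Z.det ^ (Fintype.card ι : ℝ)⁻¹ := by
    rw [det_smul, Real.mul_rpow (by positivity) hZ.det_nonneg, ← Real.rpow_natCast,
      ← Real.rpow_mul hc, mul_inv_cancel₀ (by positivity), Real.rpow_one]
  simpa only [smul_eq_mul, hsmul ha X hX, hsmul hb Y hY] using
    (hX.smul ha).det_rpow_add_det_rpow_le (hY.smul hb)

lemma concaveOn_det_fromBlocks_rpow {m : Type*} [Fintype m] [DecidableEq m]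
    (P D : Matrix m m ℝ) (y : Matrix m Unit ℝ) (w : Matrix Unit Unit ℝ) {S : Set ℝ}
    (hS : Convex ℝ S) (hpsd : ∀ t ∈ S, (fromBlocks (P + t • D) y yᴴ w).PosSemidef) :
    ConcaveOn ℝ S fun t ↦ (fromBlocks (P + t • D) y yᴴ w).det ^ (Fintype.card m : ℝ)⁻¹ := by
  set r : ℝ := (Fintype.card m : ℝ)⁻¹
  rcases S.eq_empty_or_nonempty with rfl | ⟨t₀, ht₀⟩
  · exact ⟨convex_empty, fun _ h ↦ h.elim⟩
  rcases ((hpsd t₀ ht₀).diag_nonneg (i := Sum.inr ())).eq_or_lt with hw | hw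
  · -- `0 ^ r` rather than `0`: it is `1` when `m` is empty
    refine (concaveOn_const ((0 : ℝ) ^ r) hS).congr fun t ht ↦ ?_
    rw [(hpsd t ht).det_eq_zero_of_diag_eq_zero (i := Sum.inr ()) hw.symm]
  have hwd : w.PosDef := by
    rw [show w = diagonal fun _ ↦ w () () by ext ⟨⟩ ⟨⟩; rfl, posDef_diagonal_iff]
    exact fun _ ↦ hw
  have := hwd.isUnit.invertible
  set C := P - y * w⁻¹ * yᴴ
  have hschur (t : ℝ) : P + t • D - y * w⁻¹ * yᴴ = C + t • D := sub_add_eq_add_sub .. |>.symm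
  have hC : ∀ t ∈ S, (C + t • D).PosSemidef := fun t ht ↦
    hschur t ▸ (PosDef.fromBlocks₂₂ _ _ hwd).1 (hpsd t ht)
  have hg : ConcaveOn ℝ S fun t ↦ (C + t • D).det ^ r := by
    refine ⟨hS, fun s hs t ht a b ha hb hab ↦ ?_⟩
    have hline : C + (a • s + b • t) • D = a • (C + s • D) + b • (C + t • D) := by
      rw [smul_add, smul_add, smul_smul, smul_smul, add_add_add_comm, ← add_smul, hab, one_smul,
        ← add_smul, smul_eq_mul, smul_eq_mul]
    simpa only [hline] using concaveOn_det_rpow_inv_card.2 (hC s hs) (hC t ht) ha hb hab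
  refine (hg.smul (Real.rpow_nonneg hwd.det_pos.le r)).congr fun t ht ↦ ?_
  rw [det_fromBlocks₂₂, invOf_eq_nonsing_inv, hschur,
    Real.mul_rpow hwd.det_pos.le (hC t ht).det_nonneg]
  rfl

lemma concaveOn_det_add_smul_rpow {A B : Matrix ι ι ℝ} (hA : A.IsHermitian) (hB : B.IsHermitian)
    (hBdet : B.det = 0) {S : Set ℝ} (hS : Convex ℝ S)
    (hpsd : ∀ t ∈ S, (A + t • B).PosSemidef) :
    ConcaveOn ℝ S fun t ↦ (A + t • B).det ^ ((Fintype.card ι : ℝ) - 1)⁻¹ := by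
  obtain ⟨k, hk⟩ : ∃ k, hB.eigenvalues k = 0 := by
    simpa [hB.det_eq_prod_eigenvalues, Finset.prod_eq_zero_iff] using hBdet
  set U : Matrix ι ι ℝ := (hB.eigenvectorUnitary : Matrix ι ι ℝ)
  let e : {i // i ≠ k} ⊕ Unit ≃ ι :=
    (Equiv.optionEquivSumPUnit _).symm.trans (Equiv.optionSubtypeNe k)
  let T : Matrix ι ι ℝ → Matrix ({i // i ≠ k} ⊕ Unit) ({i // i ≠ k} ⊕ Unit) ℝ :=
    fun X ↦ (Uᴴ * X * U).submatrix e e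
  have hcard : (Fintype.card ι : ℝ) - 1 = Fintype.card {i // i ≠ k} := by
    rw [← Fintype.card_congr e]; simp
  have hTdet (X : Matrix ι ι ℝ) : (T X).det = X.det := by
    rw [det_submatrix_equiv_self, det_mul_right_comm, ← star_eq_conjTranspose,
      Unitary.star_mul_self_of_mem hB.eigenvectorUnitary.2, Matrix.one_mul]
  set D : Matrix {i // i ≠ k} {i // i ≠ k} ℝ := diagonal fun i ↦ hB.eigenvalues i
  have hTB : T B = fromBlocks D 0 0 0 := by
    simp only [T, U, D, hB.conjTranspose_eigenvectorUnitary_mul_mul]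
    have hne (i : {i // i ≠ k}) : (i : ι) ≠ k := i.2
    ext (i | ⟨⟩) (j | ⟨⟩) <;>
      simp [e, diagonal_apply, hk, hne, (hne _).symm, Subtype.ext_iff]
  have hTA : fromBlocks (T A).toBlocks₁₁ (T A).toBlocks₁₂ (T A).toBlocks₁₂ᴴ (T A).toBlocks₂₂
      = T A :=
    ((isHermitian_conjTranspose_mul_mul U hA).submatrix e).fromBlocks_toBlocks
  have hfam (t : ℝ) : T (A + t • B) = fromBlocks ((T A).toBlocks₁₁ + t • D)
      (T A).toBlocks₁₂ (T A).toBlocks₁₂ᴴ (T A).toBlocks₂₂ := by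
    have hlin : T (A + t • B) = T A + t • T B := by
      ext i j
      simp [T, Matrix.mul_add, Matrix.add_mul]
    conv_lhs => rw [hlin, hTB, ← hTA, fromBlocks_smul, fromBlocks_add]
    simp only [smul_zero, add_zero]
  refine (concaveOn_det_fromBlocks_rpow (T A).toBlocks₁₁ D (T A).toBlocks₁₂ (T A).toBlocks₂₂ hS
    fun t ht ↦ ?_).congr fun t _ ↦ ?_
  · rw [← hfam]
    exact ((hpsd t ht).conjTranspose_mul_mul_same U).submatrix e
  simp only [← hfam, hTdet, hcard]

end Matrix

theorem stmt0_general (d : ℕ)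
    (A B : Matrix (Fin d) (Fin d) ℝ)
    (hA : A.PosSemidef) (hBsymm : B.IsSymm) (hBsing : B.det = 0)
    (hAB : (A + B).PosSemidef) :
    ConcaveOn ℝ (Set.Icc (0:ℝ) 1)
      (fun t : ℝ => (A + t • B).det ^ ((1 : ℝ) / (d - 1))) := by
  have hpsd (t : ℝ) (ht : t ∈ Set.Icc (0 : ℝ) 1) : (A + t • B).PosSemidef := by
    rw [show A + t • B = (1 - t) • A + t • (A + B) by module]
    exact (hA.smul (sub_nonneg.2 ht.2)).add (hAB.smul ht.1)
  simpa [one_div] using concaveOn_det_add_smul_rpow hA.1 (isHermitian_iff_isSymm.2 hBsymm)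
    hBsing (convex_Icc 0 1) hpsd

theorem stmt0 (d : ℕ) (hd : 2 ≤ d)
    (A B : Matrix (Fin d) (Fin d) ℝ)
    (hA : A.PosSemidef) (hBsymm : B.IsSymm) (hBsing : B.det = 0)
    (hAB : (A + B).PosSemidef) :
    ConcaveOn ℝ (Set.Icc (0:ℝ) 1)
      (fun t : ℝ => (A + t • B).det ^ ((1 : ℝ) / (d - 1))) :=
  stmt0_general d A B hA hBsymm hBsing hAB
end

section
/- Let d ≥ 2 and α > 0. The map A ↦ (det A)^α on the cone of d×d real positive semi-definite symmetric matrices is Λ-concave (i.e., concave along every segment [A, A+B] contained in the cone with det B = 0) if and only if α ≤ 1/(d-1). -/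
/-!
Unless `A` and `C` share a kernel vector (and then the determinant vanishes along the whole
segment), `A + C` is positive definite and `A`, `C` can be diagonalised simultaneously by a
congruence: `A = M diag(a) Mᵀ`, `C = M diag(c) Mᵀ` with `a, c ≥ 0`. Hence
`det((1 - t) A + t C) = (det M)² ∏ᵢ ((1 - t) aᵢ + t cᵢ)`, and `det (C - A) = 0` forces `aᵢ = cᵢ`
for some `i`, so at most `d - 1` of the factors depend on `t`. A product of `k` nonnegative affine
functions raised to the power `α` is concave as soon as `k α ≤ 1`, by the concavity of the
geometric mean (weighted AM-GM). Conversely, along the segment from `diag(1, 0, …, 0)` to `1` the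
function is `t ↦ t ^ ((d - 1) α)`, which is concave only if `(d - 1) α ≤ 1`.
-/

open Matrix Finset Set

theorem prod_rpow_inv_card_le_mul_sum_div {ι : Type*} {s : Finset ι} (hs : s.Nonempty)
    {x w : ι → ℝ} (hx : ∀ i ∈ s, 0 ≤ x i) (hw : ∀ i ∈ s, 0 < w i) :
    ∏ i ∈ s, x i ^ (#s : ℝ)⁻¹ ≤ (∏ i ∈ s, w i ^ (#s : ℝ)⁻¹) * ((#s : ℝ)⁻¹ * ∑ i ∈ s, x i / w i) := by
  have hk : (0 : ℝ) < #s := by positivity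
  have h := Real.geom_mean_le_arith_mean_weighted s (fun _ => (#s : ℝ)⁻¹) (fun i => x i / w i)
    (fun _ _ => by positivity) (by simp [hk.ne']) fun i hi => div_nonneg (hx i hi) (hw i hi).le
  rwa [prod_congr rfl fun i hi => Real.div_rpow (hx i hi) (hw i hi).le _, prod_div_distrib,
    div_le_iff₀ (prod_pos fun i hi => Real.rpow_pos_of_pos (hw i hi) _), ← mul_sum, mul_comm] at h

theorem concaveOn_prod_rpow_inv_card {ι : Type*} (s : Finset ι) :
    ConcaveOn ℝ (Ici 0) (fun u : ι → ℝ => ∏ i ∈ s, u i ^ (#s : ℝ)⁻¹) := by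
  refine ⟨convex_Ici 0, fun u hu v hv p q hp hq hpq => ?_⟩
  rcases s.eq_empty_or_nonempty with rfl | hs
  · simp [hpq]
  set k : ℝ := (#s : ℝ)
  have hk : 0 < k := by positivity
  set w := p • u + q • v
  have hwi : ∀ i, w i = p * u i + q * v i := fun i => rfl
  simp only [smul_eq_mul]
  by_cases! hw : ∀ i ∈ s, 0 < w i
  · set G := ∏ i ∈ s, w i ^ k⁻¹
    have hsum : ∑ i ∈ s, (p * (u i / w i) + q * (v i / w i)) = k := by
      have h1 : ∀ i ∈ s, p * (u i / w i) + q * (v i / w i) = 1 := fun i hi => by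
        rw [mul_div_assoc', mul_div_assoc', ← add_div, ← hwi, div_self (hw i hi).ne']
      simp [sum_congr rfl h1, k]
    calc p * ∏ i ∈ s, u i ^ k⁻¹ + q * ∏ i ∈ s, v i ^ k⁻¹
        ≤ p * (G * (k⁻¹ * ∑ i ∈ s, u i / w i)) + q * (G * (k⁻¹ * ∑ i ∈ s, v i / w i)) := by
          gcongr
          exacts [prod_rpow_inv_card_le_mul_sum_div hs (fun i _ => hu i) hw,
            prod_rpow_inv_card_le_mul_sum_div hs (fun i _ => hv i) hw]
      _ = G * (k⁻¹ * ∑ i ∈ s, (p * (u i / w i) + q * (v i / w i))) := by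
          rw [sum_add_distrib, ← mul_sum, ← mul_sum]; ring
      _ = G := by rw [hsum, inv_mul_cancel₀ hk.ne', mul_one]
  · obtain ⟨i, hi, hwi0⟩ := hw
    have hvanish : ∀ x : ι → ℝ, x i = 0 → ∏ j ∈ s, x j ^ k⁻¹ = 0 := fun x hx =>
      prod_eq_zero hi (by rw [hx, Real.zero_rpow (inv_ne_zero hk.ne')])
    have hpu : p * u i = 0 := by nlinarith [mul_nonneg hp (hu i), mul_nonneg hq (hv i), hwi i]
    have hqv : q * v i = 0 := by nlinarith [mul_nonneg hp (hu i), mul_nonneg hq (hv i), hwi i]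
    have hp0 : p * ∏ j ∈ s, u j ^ k⁻¹ = 0 := by
      rcases mul_eq_zero.mp hpu with h | h <;> simp [h, hvanish u]
    have hq0 : q * ∏ j ∈ s, v j ^ k⁻¹ = 0 := by
      rcases mul_eq_zero.mp hqv with h | h <;> simp [h, hvanish v]
    rw [hp0, hq0, zero_add]
    exact prod_nonneg fun j _ =>
      Real.rpow_nonneg (add_nonneg (mul_nonneg hp (hu j)) (mul_nonneg hq (hv j))) _

theorem concaveOn_prod_rpow {ι : Type*} (s : Finset ι) {β : ℝ} (hβ : 0 ≤ β) (hsβ : #s * β ≤ 1) :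
    ConcaveOn ℝ (Ici 0) (fun u : ι → ℝ => (∏ i ∈ s, u i) ^ β) := by
  rcases s.eq_empty_or_nonempty with rfl | hs
  · simpa using concaveOn_const (c := (1 : ℝ)) (convex_Ici (0 : ι → ℝ))
  set k : ℝ := (#s : ℝ)
  have hk : 0 < k := by positivity
  set G := fun u : ι → ℝ => ∏ i ∈ s, u i ^ k⁻¹
  have hG0 : ∀ u ∈ Ici (0 : ι → ℝ), 0 ≤ G u := fun u hu =>
    prod_nonneg fun i _ => Real.rpow_nonneg (hu i) _
  have hpow : ∀ u ∈ Ici (0 : ι → ℝ), (∏ i ∈ s, u i) ^ β = G u ^ (k * β) := fun u hu => by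
    rw [show G u = _ from Real.finsetProd_rpow s u (fun i _ => hu i) k⁻¹,
      ← Real.rpow_mul (prod_nonneg fun i _ => hu i), inv_mul_cancel_left₀ hk.ne']
  refine ⟨convex_Ici 0, fun u hu v hv p q hp hq hpq => ?_⟩
  have hw := (convex_Ici (0 : ι → ℝ)) hu hv hp hq hpq
  simp only [smul_eq_mul, hpow u hu, hpow v hv, hpow _ hw]
  calc p * G u ^ (k * β) + q * G v ^ (k * β) ≤ (p * G u + q * G v) ^ (k * β) :=
        (Real.concaveOn_rpow (by positivity) hsβ).2 (hG0 u hu) (hG0 v hv) hp hq hpq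
    _ ≤ G (p • u + q • v) ^ (k * β) := by
        gcongr
        · exact add_nonneg (mul_nonneg hp (hG0 u hu)) (mul_nonneg hq (hG0 v hv))
        · exact (concaveOn_prod_rpow_inv_card s).2 hu hv hp hq hpq

theorem concaveOn_prod_lineMap_rpow {ι : Type*} {a c : ι → ℝ} (ha : 0 ≤ a) (hc : 0 ≤ c)
    (s : Finset ι) {β : ℝ} (hβ : 0 ≤ β) (hsβ : #s * β ≤ 1) :
    ConcaveOn ℝ (Icc 0 1) (fun t : ℝ => (∏ i ∈ s, ((1 - t) * a i + t * c i)) ^ β) := by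
  have hsub : Icc (0 : ℝ) 1 ⊆ AffineMap.lineMap a c ⁻¹' Ici 0 := fun t ht => by
    rw [Set.mem_preimage, AffineMap.lineMap_apply_module]
    exact add_nonneg (smul_nonneg (sub_nonneg.mpr ht.2) ha) (smul_nonneg ht.1 hc)
  refine (((concaveOn_prod_rpow s hβ hsβ).comp_affineMap _).subset hsub (convex_Icc 0 1)).congr
    fun t _ => ?_
  simp [AffineMap.lineMap_apply_module]

theorem le_one_of_concaveOn_rpow {p : ℝ} (hp : 0 < p)
    (h : ConcaveOn ℝ (Icc 0 1) (fun t : ℝ => t ^ p)) : p ≤ 1 := by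
  have hmid := h.2 (left_mem_Icc.mpr zero_le_one) (right_mem_Icc.mpr zero_le_one)
    (by norm_num : (0 : ℝ) ≤ 1 / 2) (by norm_num : (0 : ℝ) ≤ 1 / 2) (by norm_num)
  norm_num [Real.zero_rpow hp.ne'] at hmid
  rwa [← Real.rpow_le_rpow_left_iff_of_base_lt_one (by norm_num : (0 : ℝ) < 1 / 2) (by norm_num),
    Real.rpow_one]

section RCLike

variable {𝕜 n : Type*} [RCLike 𝕜] [Fintype n]
open scoped ComplexOrder

theorem Matrix.PosSemidef.mulVec_eq_zero_of_add_mulVec_eq_zero {A C : Matrix n n 𝕜}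
    (hA : A.PosSemidef) (hC : C.PosSemidef) {v : n → 𝕜} (hv : (A + C) *ᵥ v = 0) :
    A *ᵥ v = 0 ∧ C *ᵥ v = 0 := by
  have hsum : star v ⬝ᵥ A *ᵥ v + star v ⬝ᵥ C *ᵥ v = 0 := by
    rw [← dotProduct_add, ← add_mulVec, hv, dotProduct_zero]
  obtain ⟨hAv, hCv⟩ := (add_eq_zero_iff_of_nonneg (hA.dotProduct_mulVec_nonneg v)
    (hC.dotProduct_mulVec_nonneg v)).mp hsum
  exact ⟨(hA.dotProduct_mulVec_zero_iff v).mp hAv, (hC.dotProduct_mulVec_zero_iff v).mp hCv⟩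

theorem Matrix.PosSemidef.det_lineMap_eq_zero [DecidableEq n] {A C : Matrix n n 𝕜}
    (hA : A.PosSemidef) (hC : C.PosSemidef) (hAC : (A + C).det = 0) (t : 𝕜) :
    ((1 - t) • A + t • C).det = 0 := by
  obtain ⟨v, hv0, hv⟩ := exists_mulVec_eq_zero_iff.mpr hAC
  obtain ⟨hAv, hCv⟩ := hA.mulVec_eq_zero_of_add_mulVec_eq_zero hC hv
  refine exists_mulVec_eq_zero_iff.mp ⟨v, hv0, ?_⟩
  rw [add_mulVec, smul_mulVec, smul_mulVec, hAv, hCv, smul_zero, smul_zero, add_zero]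

open scoped MatrixOrder in
theorem Matrix.PosDef.exists_simultaneous_diagonalization [DecidableEq n] {P B : Matrix n n 𝕜}
    (hP : P.PosDef) (hB : B.IsHermitian) :
    ∃ (M : Matrix n n 𝕜) (μ : n → ℝ),
      IsUnit M ∧ P = M * Mᴴ ∧ B = M * diagonal (RCLike.ofReal ∘ μ) * Mᴴ := by
  obtain ⟨L, hPL⟩ := CStarAlgebra.nonneg_iff_eq_star_mul_self.mp hP.posSemidef.nonneg
  rw [star_eq_conjTranspose] at hPL
  have hL : IsUnit L := isUnit_of_mul_isUnit_right (hPL ▸ hP.isUnit)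
  have hLinv : L⁻¹ * L = 1 := nonsing_inv_mul L ((isUnit_iff_isUnit_det L).mp hL)
  set N := L⁻¹ᴴ * B * L⁻¹
  have hN : N.IsHermitian := isHermitian_conjTranspose_mul_mul _ hB
  set U : Matrix n n 𝕜 := (hN.eigenvectorUnitary : Matrix n n 𝕜)
  have hUU : U * Uᴴ = 1 := Unitary.mul_star_self_of_mem hN.eigenvectorUnitary.2
  have hNU : N = U * diagonal (RCLike.ofReal ∘ hN.eigenvalues) * Uᴴ := hN.spectral_theorem
  have hBN : B = Lᴴ * N * L := by
    rw [show Lᴴ * N * L = (L⁻¹ * L)ᴴ * B * (L⁻¹ * L) by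
      simp only [N, conjTranspose_mul, Matrix.mul_assoc], hLinv, conjTranspose_one,
      Matrix.one_mul, Matrix.mul_one]
  refine ⟨Lᴴ * U, hN.eigenvalues, hL.star.mul Unitary.isUnit_coe, ?_, ?_⟩
  · rw [conjTranspose_mul, Matrix.mul_assoc, ← Matrix.mul_assoc U, hUU, Matrix.one_mul,
      conjTranspose_conjTranspose, hPL]
  · rw [hBN, conjTranspose_mul, conjTranspose_conjTranspose]
    nth_rw 1 [hNU]
    simp only [Matrix.mul_assoc]

end RCLike

section Real

variable {n : Type*} [Fintype n] [DecidableEq n]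

theorem Matrix.PosSemidef.exists_simultaneous_diagonalization {A C : Matrix n n ℝ}
    (hA : A.PosSemidef) (hC : C.PosSemidef) (hAC : (A + C).det ≠ 0) :
    ∃ (M : Matrix n n ℝ) (a c : n → ℝ),
      IsUnit M ∧ 0 ≤ a ∧ 0 ≤ c ∧ A = M * diagonal a * Mᴴ ∧ C = M * diagonal c * Mᴴ := by
  obtain ⟨M, μ, hM, hP, hCM⟩ :=
    ((hA.add hC).posDef_iff_det_ne_zero.mpr hAC).exists_simultaneous_diagonalization hC.1
  simp only [RCLike.ofReal_real_eq_id, Function.id_comp] at hCM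
  have hAM : A = M * diagonal (1 - μ) * Mᴴ := by
    have hD : diagonal (1 - μ) = 1 - diagonal μ := by
      rw [← diagonal_one]; exact (diagonal_sub _ _).symm
    rw [hD, Matrix.mul_sub, Matrix.sub_mul, ← hCM, Matrix.mul_one, ← hP]
    abel
  have hnonneg {X : Matrix n n ℝ} {x : n → ℝ} (hX : X.PosSemidef) (hXM : X = M * diagonal x * Mᴴ) :
      0 ≤ x := by
    rwa [hXM, ← star_eq_conjTranspose, hM.posSemidef_star_right_conjugate_iff,
      posSemidef_diagonal_iff] at hX
  exact ⟨M, 1 - μ, μ, hM, hnonneg hA hAM, hnonneg hC hCM, hAM, hCM⟩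

theorem det_mul_diagonal_mul_conjTranspose (M : Matrix n n ℝ) (x : n → ℝ) :
    (M * diagonal x * Mᴴ).det = M.det ^ 2 * ∏ i, x i := by
  rw [det_mul, det_mul, det_conjTranspose, det_diagonal, star_trivial]
  ring

theorem det_lineMap_diagonal_single_one (i₀ : n) (t : ℝ) :
    ((1 - t) • diagonal (Pi.single i₀ 1) + t • (1 : Matrix n n ℝ)).det =
      t ^ (Fintype.card n - 1) := by
  have hdiag : (1 - t) • diagonal (Pi.single i₀ 1) + t • (1 : Matrix n n ℝ) =
      diagonal (Function.update (fun _ => t) i₀ 1) := by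
    ext i j
    rcases eq_or_ne i j with rfl | hij
    · rcases eq_or_ne i i₀ with rfl | hi <;> simp [*]
    · simp [hij]
  rw [hdiag, det_diagonal, prod_update_of_mem (mem_univ _), prod_const, one_mul,
    card_sdiff_of_subset (by simp), card_univ, Finset.card_singleton]

theorem concaveOn_det_lineMap_rpow {α : ℝ} (hα : 0 ≤ α)
    (hnα : ((Fintype.card n : ℝ) - 1) * α ≤ 1) {A C : Matrix n n ℝ} (hA : A.PosSemidef)
    (hC : C.PosSemidef) (hCA : (C - A).det = 0) :
    ConcaveOn ℝ (Icc 0 1) (fun t : ℝ => ((1 - t) • A + t • C).det ^ α) := by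
  by_cases hAC : (A + C).det = 0
  · simp only [hA.det_lineMap_eq_zero hC hAC]
    exact concaveOn_const _ (convex_Icc 0 1)
  obtain ⟨M, a, c, hM, ha, hc, rfl, rfl⟩ := hA.exists_simultaneous_diagonalization hC hAC
  have hMdet : M.det ≠ 0 := ((isUnit_iff_isUnit_det M).mp hM).ne_zero
  have hdet := det_mul_diagonal_mul_conjTranspose M
  obtain ⟨i₀, -, hi₀⟩ : ∃ i ∈ Finset.univ, c i - a i = 0 := by
    rw [← Matrix.sub_mul, ← Matrix.mul_sub, diagonal_sub, hdet] at hCA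
    exact prod_eq_zero_iff.mp ((mul_eq_zero.mp hCA).resolve_left (pow_ne_zero 2 hMdet))
  have hcard : (#(univ.erase i₀) : ℝ) * α ≤ 1 := by
    rwa [card_erase_of_mem (mem_univ _), card_univ, Nat.cast_pred (Fintype.card_pos_iff.mpr ⟨i₀⟩)]
  refine ((concaveOn_prod_lineMap_rpow ha hc _ hα hcard).smul
    (Real.rpow_nonneg (mul_nonneg (sq_nonneg M.det) (ha i₀)) α)).congr fun t ht => ?_
  have hseg : (1 - t) • (M * diagonal a * Mᴴ) + t • (M * diagonal c * Mᴴ)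
      = M * diagonal (fun i => (1 - t) * a i + t * c i) * Mᴴ := by
    rw [show (fun i => (1 - t) * a i + t * c i) = fun i => ((1 - t) • a) i + (t • c) i from rfl,
      ← diagonal_add, diagonal_smul, diagonal_smul, Matrix.mul_add, Matrix.add_mul,
      Matrix.mul_smul, Matrix.mul_smul, Matrix.smul_mul, Matrix.smul_mul]
  have hi₀' : (1 - t) * a i₀ + t * c i₀ = a i₀ := by rw [sub_eq_zero.mp hi₀]; ring
  dsimp only
  rw [hseg, hdet, ← mul_prod_erase _ _ (mem_univ i₀), hi₀', ← mul_assoc, smul_eq_mul,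
    Real.mul_rpow (mul_nonneg (sq_nonneg _) (ha i₀)) (prod_nonneg fun i _ =>
      add_nonneg (mul_nonneg (sub_nonneg.mpr ht.2) (ha i)) (mul_nonneg ht.1 (hc i)))]

theorem le_of_forall_concaveOn_det_lineMap_rpow (hn : 2 ≤ Fintype.card n) {α : ℝ} (hα : 0 < α)
    (h : ∀ A C : Matrix n n ℝ, A.PosSemidef → C.PosSemidef → (C - A).det = 0 →
      ConcaveOn ℝ (Icc 0 1) (fun t : ℝ => ((1 - t) • A + t • C).det ^ α)) :
    ((Fintype.card n : ℝ) - 1) * α ≤ 1 := by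
  obtain ⟨i₀⟩ : Nonempty n := Fintype.card_pos_iff.mp (by omega)
  have hsingular : (1 - diagonal (Pi.single i₀ 1) : Matrix n n ℝ).det = 0 := by
    rw [← diagonal_one, diagonal_sub, det_diagonal]
    exact prod_eq_zero (mem_univ i₀) (by simp)
  have hconc := h _ 1 (PosSemidef.diagonal (Pi.single_nonneg.mpr zero_le_one)) PosSemidef.one
    hsingular
  have hcard : ((Fintype.card n - 1 : ℕ) : ℝ) = (Fintype.card n : ℝ) - 1 := by
    rw [Nat.cast_sub (by omega), Nat.cast_one]
  have hn' : (2 : ℝ) ≤ Fintype.card n := by exact_mod_cast hn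
  refine le_one_of_concaveOn_rpow (mul_pos (by linarith) hα) (hconc.congr fun t ht => ?_)
  dsimp only
  rw [det_lineMap_diagonal_single_one, ← Real.rpow_natCast, ← Real.rpow_mul ht.1, hcard]

end Real

theorem stmt1 (d : ℕ) (hd : 2 ≤ d) (α : ℝ) (hα : 0 < α) :
    (∀ A C : Matrix (Fin d) (Fin d) ℝ,
        A.PosSemidef → C.PosSemidef → (C - A).det = 0 →
        ConcaveOn ℝ (Set.Icc (0:ℝ) 1)
          (fun t : ℝ => ((1 - t) • A + t • C).det ^ α))
      ↔ α ≤ 1 / (d - 1) := by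
  have hd' : (0 : ℝ) < d - 1 := by
    have : (2 : ℝ) ≤ d := by exact_mod_cast hd
    linarith
  rw [le_div_iff₀ hd', mul_comm]
  refine ⟨fun h => ?_, fun h A C hA hC hCA => concaveOn_det_lineMap_rpow hα.le ?_ hA hC hCA⟩
  · simpa using le_of_forall_concaveOn_det_lineMap_rpow (by simpa using hd) hα h
  · simpa using h
end

section
/- If A is a d×d real positive semi-definite symmetric matrix, B is a d×d real singular symmetric matrix with A + B positive semi-definite, and f(t) = (det(A + tB))^(1/(d-1)), then f(t) ≤ f(0) + t·f'(0) for all t ∈ [0,1], where f'(0) is the right derivative at 0 (assuming A is positive definite so that f is differentiable at 0). -/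
/-
Write `A = Cᴴ C`. Then `A + t B = Cᴴ (1 + t M) C` with `M = C⁻ᴴ B C⁻¹` Hermitian, so
`det (A + t B) = det A * ∏ i, (1 + t μᵢ)` for the eigenvalues `μᵢ` of `M`. Since `A + t B` is
positive definite for `t ∈ [0, 1)`, no factor vanishes there, i.e. `μᵢ ≥ -1`; since
`det B = det A * ∏ μᵢ = 0`, some `μᵢ = 0`. On `[0, 1]` the function `f` is thus `(det A)^(1/(d-1))`
times the geometric mean of `d - 1` nonnegative affine functions of `t`, which is concave: the
weighted geometric mean is superadditive (by AM-GM) and positively homogeneous. A concave function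
lies below its right tangent line at `0`.
-/

open Matrix Finset

namespace Real

variable {ι : Type*} (s : Finset ι) {w : ι → ℝ}

theorem prod_rpow_add_prod_rpow_le_prod_add_rpow (hw : ∀ i ∈ s, 0 < w i)
    (hw1 : ∑ i ∈ s, w i = 1) {u v : ι → ℝ} (hu : ∀ i ∈ s, 0 ≤ u i) (hv : ∀ i ∈ s, 0 ≤ v i) :
    ∏ i ∈ s, u i ^ w i + ∏ i ∈ s, v i ^ w i ≤ ∏ i ∈ s, (u i + v i) ^ w i := by
  by_cases hz : ∃ i ∈ s, u i + v i = 0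
  · obtain ⟨i, hi, hzero⟩ := hz
    have hu0 : u i = 0 := by linarith [hu i hi, hv i hi]
    have hv0 : v i = 0 := by linarith [hu i hi, hv i hi]
    have hprod_zero : ∀ z : ι → ℝ, z i = 0 → ∏ j ∈ s, z j ^ w j = 0 := fun z hz =>
      prod_eq_zero hi (by rw [hz, zero_rpow (hw i hi).ne'])
    rw [hprod_zero u hu0, hprod_zero v hv0, hprod_zero (fun j => u j + v j) (by simp [hu0, hv0]),
      add_zero]
  simp only [not_exists, not_and, ← ne_eq] at hz
  have hpos : ∀ i ∈ s, 0 < u i + v i := fun i hi =>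
    lt_of_le_of_ne (add_nonneg (hu i hi) (hv i hi)) (hz i hi).symm
  have hP : 0 < ∏ i ∈ s, (u i + v i) ^ w i := prod_pos fun i hi => rpow_pos_of_pos (hpos i hi) _
  -- AM-GM applied to `z / (u + v)`, then multiplied back by `∏ (u + v) ^ w`
  have amgm : ∀ z : ι → ℝ, (∀ i ∈ s, 0 ≤ z i) → ∏ i ∈ s, z i ^ w i ≤
      (∑ i ∈ s, w i * (z i / (u i + v i))) * ∏ i ∈ s, (u i + v i) ^ w i := by
    intro z hz
    have h := geom_mean_le_arith_mean_weighted s w (fun i => z i / (u i + v i))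
      (fun i hi => (hw i hi).le) hw1 fun i hi => div_nonneg (hz i hi) (hpos i hi).le
    rwa [prod_congr rfl fun i hi => div_rpow (hz i hi) (hpos i hi).le _, prod_div_distrib,
      div_le_iff₀ hP] at h
  have hsum : ∑ i ∈ s, w i * (u i / (u i + v i)) + ∑ i ∈ s, w i * (v i / (u i + v i)) = 1 := by
    rw [← sum_add_distrib, ← hw1]
    refine sum_congr rfl fun i hi => ?_
    field_simp [(hpos i hi).ne']
  nlinarith [amgm u hu, amgm v hv]

theorem prod_mul_rpow_of_sum_eq_one (hw : ∀ i ∈ s, 0 ≤ w i) (hw1 : ∑ i ∈ s, w i = 1)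
    {c : ℝ} (hc : 0 ≤ c) {z : ι → ℝ} (hz : ∀ i ∈ s, 0 ≤ z i) :
    ∏ i ∈ s, (c * z i) ^ w i = c * ∏ i ∈ s, z i ^ w i := by
  rw [prod_congr rfl fun i hi => mul_rpow hc (hz i hi), prod_mul_distrib,
    ← rpow_sum_of_nonneg hc hw, hw1, rpow_one]

theorem concaveOn_prod_rpow (hw : ∀ i ∈ s, 0 < w i) (hw1 : ∑ i ∈ s, w i = 1) :
    ConcaveOn ℝ ((s : Set ι).pi fun _ => Set.Ici 0) fun z => ∏ i ∈ s, z i ^ w i := by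
  refine ⟨convex_pi fun _ _ => convex_Ici 0, fun x hx y hy a b ha hb hab => ?_⟩
  simp only [Set.mem_pi, Finset.mem_coe, Set.mem_Ici] at hx hy
  have hw0 : ∀ i ∈ s, 0 ≤ w i := fun i hi => (hw i hi).le
  calc a • ∏ i ∈ s, x i ^ w i + b • ∏ i ∈ s, y i ^ w i
      = ∏ i ∈ s, (a * x i) ^ w i + ∏ i ∈ s, (b * y i) ^ w i := by
        rw [prod_mul_rpow_of_sum_eq_one s hw0 hw1 ha hx,
          prod_mul_rpow_of_sum_eq_one s hw0 hw1 hb hy, smul_eq_mul, smul_eq_mul]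
    _ ≤ ∏ i ∈ s, (a * x i + b * y i) ^ w i :=
        prod_rpow_add_prod_rpow_le_prod_add_rpow s hw hw1
          (fun i hi => mul_nonneg ha (hx i hi)) fun i hi => mul_nonneg hb (hy i hi)
    _ = ∏ i ∈ s, (a • x + b • y) i ^ w i := rfl

end Real

theorem concaveOn_prod_one_add_mul_rpow {ι : Type*} (s : Finset ι) (μ : ι → ℝ) {D : Set ℝ}
    (hD : Convex ℝ D) (hμ : ∀ t ∈ D, ∀ i ∈ s, 0 ≤ 1 + t * μ i) :
    ConcaveOn ℝ D fun t => (∏ i ∈ s, (1 + t * μ i)) ^ (1 / (#s : ℝ)) := by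
  rcases s.eq_empty_or_nonempty with rfl | hs
  · simpa using concaveOn_const (1 : ℝ) hD
  have hcard : (0 : ℝ) < #s := by exact_mod_cast hs.card_pos
  have hG := Real.concaveOn_prod_rpow s (w := fun _ => 1 / (#s : ℝ)) (fun _ _ => by positivity)
    (by simp [hcard.ne'])
  have hcomp := hG.comp_affineMap (AffineMap.lineMap (1 : ι → ℝ) (1 + μ))
  refine (hcomp.subset (fun t ht => ?_) hD).congr fun t ht => ?_
  · simpa [AffineMap.lineMap_apply_module', add_comm] using hμ t ht
  · simp only [Function.comp_apply, AffineMap.lineMap_apply_module']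
    rw [← Real.finsetProd_rpow _ _ fun i hi => hμ t ht i hi]
    simp [add_comm]

theorem neg_one_le_of_forall_prod_one_add_mul_pos {ι : Type*} {s : Finset ι} {μ : ι → ℝ}
    (h : ∀ t ∈ Set.Ico (0 : ℝ) 1, 0 < ∏ i ∈ s, (1 + t * μ i)) : ∀ i ∈ s, -1 ≤ μ i := by
  intro i hi
  by_contra! hlt
  have hinv : μ i * (μ i)⁻¹ = 1 := mul_inv_cancel₀ (by linarith)
  have hroot : -(μ i)⁻¹ ∈ Set.Ico (0 : ℝ) 1 := ⟨by nlinarith, by nlinarith⟩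
  exact (h _ hroot).ne' (prod_eq_zero hi (by linear_combination -hinv))

theorem ConcaveOn.le_add_mul_of_hasDerivWithinAt_Ici {S : Set ℝ} {f : ℝ → ℝ} {x y f' : ℝ}
    (hf : ConcaveOn ℝ S f) (hx : x ∈ S) (hy : y ∈ S) (hxy : x ≤ y)
    (hf' : HasDerivWithinAt f f' (Set.Ici x) x) : f y ≤ f x + (y - x) * f' := by
  rcases hxy.eq_or_lt with rfl | hlt
  · simp
  have h := hf.slope_le_of_hasDerivWithinAt_Ioi hx hy hlt (hf'.mono Set.Ioi_subset_Ici_self)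
  rw [slope_def_field, div_le_iff₀ (sub_pos.2 hlt)] at h
  linarith

namespace Matrix

variable {n : Type*} [Fintype n] [DecidableEq n]

theorem IsHermitian.det_one_add_smul {M : Matrix n n ℝ} (hM : M.IsHermitian) (t : ℝ) :
    (1 + t • M).det = ∏ i, (1 + t * hM.eigenvalues i) := by
  set U := hM.eigenvectorUnitary
  have hconj : 1 + t • M = Unitary.conjStarAlgAut ℝ _ U
      (diagonal fun i => 1 + t * hM.eigenvalues i) := by
    conv_lhs => rw [hM.spectral_theorem]
    rw [← map_one (Unitary.conjStarAlgAut ℝ _ U), ← map_smul, ← map_add]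
    congr 1
    ext i j
    by_cases h : i = j <;> simp [diagonal, h]
  rw [hconj, Unitary.conjStarAlgAut_apply, det_mul, det_mul, mul_right_comm, ← det_mul]
  simp [det_diagonal]

theorem det_conjTranspose_mul_mul {R : Type*} [CommRing R] [StarRing R] (C X : Matrix n n R) :
    (Cᴴ * X * C).det = (Cᴴ * C).det * X.det := by
  simp only [det_mul]; ring

open scoped MatrixOrder in
theorem PosDef.exists_det_add_smul_eq_mul_prod {A B : Matrix n n ℝ} (hA : A.PosDef)
    (hB : B.IsHermitian) : ∃ μ : n → ℝ,
      (∀ t : ℝ, (A + t • B).det = A.det * ∏ i, (1 + t * μ i)) ∧ B.det = A.det * ∏ i, μ i := by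
  obtain ⟨C, rfl⟩ := CStarAlgebra.nonneg_iff_eq_star_mul_self.mp hA.posSemidef.nonneg
  rw [star_eq_conjTranspose] at hA ⊢
  have hC : IsUnit C.det := by
    refine isUnit_iff_ne_zero.mpr fun h => hA.det_pos.ne' ?_
    rw [det_mul, h, mul_zero]
  set M := (C⁻¹)ᴴ * B * C⁻¹
  have hM : M.IsHermitian := isHermitian_conjTranspose_mul_mul _ hB
  have hCMC : Cᴴ * M * C = B := by
    rw [← mul_assoc, ← mul_assoc, ← conjTranspose_mul, nonsing_inv_mul _ hC, conjTranspose_one,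
      one_mul, mul_assoc, nonsing_inv_mul _ hC, mul_one]
  refine ⟨hM.eigenvalues, fun t => ?_, ?_⟩
  · have : Cᴴ * C + t • B = Cᴴ * (1 + t • M) * C := by
      rw [← hCMC, mul_add, add_mul, mul_one, mul_smul_comm, smul_mul_assoc, mul_assoc]
    rw [this, det_conjTranspose_mul_mul, hM.det_one_add_smul]
  · rw [← hCMC, det_conjTranspose_mul_mul, hM.det_eq_prod_eigenvalues]
    simp

theorem PosDef.det_add_smul_pos {A B : Matrix n n ℝ} (hA : A.PosDef) (hAB : (A + B).PosSemidef)
    {t : ℝ} (ht : t ∈ Set.Ico (0 : ℝ) 1) : 0 < (A + t • B).det := by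
  have h : A + t • B = (1 - t) • A + t • (A + B) := by module
  rw [h]
  exact ((hA.smul (by linarith [ht.2])).add_posSemidef (hAB.smul ht.1)).det_pos

theorem PosDef.concaveOn_det_add_smul_rpow {A B : Matrix n n ℝ} (hA : A.PosDef)
    (hB : B.IsHermitian) (hBsing : B.det = 0) (hAB : (A + B).PosSemidef) :
    ConcaveOn ℝ (Set.Icc 0 1) fun t : ℝ =>
      (A + t • B).det ^ ((1 : ℝ) / (Fintype.card n - 1)) := by
  obtain ⟨μ, hdet, hdetB⟩ := hA.exists_det_add_smul_eq_mul_prod hB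
  have hμ : ∀ i, -1 ≤ μ i := fun i => neg_one_le_of_forall_prod_one_add_mul_pos
    (fun t ht => (mul_pos_iff_of_pos_left hA.det_pos).mp (hdet t ▸ hA.det_add_smul_pos hAB ht))
    i (mem_univ i)
  obtain ⟨i₀, -, hi₀⟩ : ∃ i ∈ univ, μ i = 0 :=
    prod_eq_zero_iff.mp ((mul_eq_zero.mp (hdetB ▸ hBsing)).resolve_left hA.det_pos.ne')
  set s := univ.erase i₀
  have hcard : (#s : ℝ) = Fintype.card n - 1 := by
    rw [card_erase_of_mem (mem_univ _), card_univ,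
      Nat.cast_sub (Fintype.card_pos_iff.mpr ⟨i₀⟩), Nat.cast_one]
  have hfac : ∀ t ∈ Set.Icc (0 : ℝ) 1, ∀ i ∈ s, 0 ≤ 1 + t * μ i := fun t ht i _ => by
    nlinarith [hμ i, ht.1, ht.2]
  refine ((concaveOn_prod_one_add_mul_rpow s μ (convex_Icc 0 1) hfac).smul
    (Real.rpow_nonneg hA.det_pos.le ((1 : ℝ) / (Fintype.card n - 1)))).congr fun t ht => ?_
  rw [hdet, ← prod_erase univ (f := fun i => 1 + t * μ i) (a := i₀) (by simp [hi₀]), hcard,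
    Real.mul_rpow hA.det_pos.le (prod_nonneg (hfac t ht))]
  rfl

end Matrix

theorem stmt2_general (d : ℕ)
    (A B : Matrix (Fin d) (Fin d) ℝ)
    (hA : A.PosDef) (hBsymm : B.IsSymm) (hBsing : B.det = 0)
    (hAB : (A + B).PosSemidef)
    (f : ℝ → ℝ) (hf : f = fun t : ℝ => (A + t • B).det ^ ((1 : ℝ) / (d - 1)))
    (f'0 : ℝ) (hder : HasDerivWithinAt f f'0 (Set.Ici (0:ℝ)) 0) :
    ∀ t ∈ Set.Icc (0:ℝ) 1, f t ≤ f 0 + t * f'0 := by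
  have hconc := hA.concaveOn_det_add_smul_rpow (isHermitian_iff_isSymm.mpr hBsymm) hBsing hAB
  rw [Fintype.card_fin, ← hf] at hconc
  intro t ht
  simpa using hconc.le_add_mul_of_hasDerivWithinAt_Ici ⟨le_rfl, zero_le_one⟩ ht ht.1 hder

theorem stmt2 (d : ℕ) (hd : 2 ≤ d)
    (A B : Matrix (Fin d) (Fin d) ℝ)
    (hA : A.PosDef) (hBsymm : B.IsSymm) (hBsing : B.det = 0)
    (hAB : (A + B).PosSemidef)
    (f : ℝ → ℝ) (hf : f = fun t : ℝ => (A + t • B).det ^ ((1 : ℝ) / (d - 1)))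
    (f'0 : ℝ) (hder : HasDerivWithinAt f f'0 (Set.Ici (0:ℝ)) 0) :
    ∀ t ∈ Set.Icc (0:ℝ) 1, f t ≤ f 0 + t * f'0 :=
  stmt2_general d A B hA hBsymm hBsing hAB f hf f'0 hder
end

section
/- Let M be a d×d real matrix with det M > 0. If (det(MS))^(1/d) ≤ (1/d)·trace(MS) holds for every d×d real symmetric positive definite matrix S, then M is symmetric positive definite. -/
/-!
Write `M = Q H` with `H = |M| = √(Mᵀ M)` positive definite and `Q = M H⁻¹` orthogonal. Testing the
hypothesis on `S = H⁻¹` gives `M S = Q`, whose determinant is `1` since `det M > 0`, so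
`d ≤ trace Q`. For an orthogonal `Q` one has `‖Q - 1‖²_F = 2 (d - trace Q)`, hence `Q = 1` and
`M = H`.
-/

open Matrix
open scoped ComplexOrder

namespace Matrix

variable {n : Type*} [Fintype n] [DecidableEq n]

open scoped MatrixOrder in
theorem exists_mem_unitaryGroup_posDef_eq_mul {𝕜 : Type*} [RCLike 𝕜] {M : Matrix n n 𝕜}
    (hM : IsUnit M) : ∃ U ∈ unitaryGroup n 𝕜, ∃ H : Matrix n n 𝕜, H.PosDef ∧ M = U * H := by
  set H := CFC.abs M
  have hHH : H * H = star M * M := CFC.abs_mul_abs M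
  have hH : H.PosDef := (CFC.abs_nonneg M).posSemidef.posDef_iff_isUnit.mpr <|
    isUnit_of_mul_isUnit_left (hHH ▸ hM.star.mul hM)
  have hHdet : IsUnit H.det := (isUnit_iff_isUnit_det H).mp hH.isUnit
  refine ⟨M * H⁻¹, ?_, H, hH, (nonsing_inv_mul_cancel_right H M hHdet).symm⟩
  rw [mem_unitaryGroup_iff', star_mul, star_eq_conjTranspose H⁻¹, hH.inv.isHermitian.eq]
  calc H⁻¹ * star M * (M * H⁻¹) = H⁻¹ * H * H * H⁻¹ := by
        rw [Matrix.mul_assoc H⁻¹ H H, hHH]; simp only [Matrix.mul_assoc]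
    _ = 1 := by rw [mul_nonsing_inv_cancel_right H _ hHdet, nonsing_inv_mul H hHdet]

theorem det_eq_one_of_mem_orthogonalGroup_of_pos {Q : Matrix n n ℝ}
    (hQ : Q ∈ orthogonalGroup n ℝ) (hdet : 0 < Q.det) : Q.det = 1 := by
  rw [← abs_of_pos hdet, ← Real.norm_eq_abs]
  exact CStarRing.norm_of_mem_unitary (det_of_mem_unitary hQ)

theorem eq_one_of_mem_orthogonalGroup_of_card_le_trace {Q : Matrix n n ℝ}
    (hQ : Q ∈ orthogonalGroup n ℝ) (htr : (Fintype.card n : ℝ) ≤ Q.trace) : Q = 1 := by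
  have hQQ : Qᵀ * Q = 1 := (mem_orthogonalGroup_iff' n ℝ).mp hQ
  have htrace : ((Q - 1)ᴴ * (Q - 1)).trace = 2 * (Fintype.card n - Q.trace) := by
    simp only [conjTranspose_eq_transpose_of_trivial, transpose_sub, transpose_one,
      sub_mul, mul_sub, hQQ, Matrix.mul_one, Matrix.one_mul, trace_sub, trace_one, trace_transpose]
    ring
  rw [← sub_eq_zero, ← trace_conjTranspose_mul_self_eq_zero_iff]
  exact le_antisymm (by linarith) (posSemidef_conjTranspose_mul_self _).trace_nonneg

end Matrix

theorem stmt4_general (d : ℕ)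
    (M : Matrix (Fin d) (Fin d) ℝ) (hdet : 0 < M.det)
    (h : ∀ S : Matrix (Fin d) (Fin d) ℝ, S.PosDef →
      (M * S).det ^ ((1 : ℝ) / d) ≤ (1 / d : ℝ) * (M * S).trace) :
    M.PosDef := by
  obtain ⟨Q, hQ, H, hH, rfl⟩ :=
    exists_mem_unitaryGroup_posDef_eq_mul ((isUnit_iff_isUnit_det M).mpr hdet.ne'.isUnit)
  have hdetQ : Q.det = 1 := det_eq_one_of_mem_orthogonalGroup_of_pos hQ
    (pos_of_mul_pos_left (det_mul Q H ▸ hdet) hH.det_pos.le)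
  have hineq := h H⁻¹ hH.inv
  rw [mul_nonsing_inv_cancel_right H Q ((isUnit_iff_isUnit_det H).mp hH.isUnit), hdetQ,
    Real.one_rpow] at hineq
  have htr : (Fintype.card (Fin d) : ℝ) ≤ Q.trace := by
    rcases Nat.eq_zero_or_pos d with rfl | hd
    -- for `d = 0` the hypothesis degenerates to `1 ≤ 0`, as `1 / 0 = 0`
    · norm_num at hineq
    · rw [Fintype.card_fin]
      rwa [one_div, ← div_eq_inv_mul, one_le_div (by positivity)] at hineq
  rwa [eq_one_of_mem_orthogonalGroup_of_card_le_trace hQ htr, Matrix.one_mul]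

theorem stmt4 (d : ℕ) (hd : 1 ≤ d)
    (M : Matrix (Fin d) (Fin d) ℝ) (hdet : 0 < M.det)
    (h : ∀ S : Matrix (Fin d) (Fin d) ℝ, S.PosDef →
      (M * S).det ^ ((1 : ℝ) / d) ≤ (1 / d : ℝ) * (M * S).trace) :
    M.PosDef :=
  stmt4_general d M hdet h
end

section
/- Let A: ℝ^d → Sym_d(ℝ) be a smooth compactly supported matrix field, taking values in positive semi-definite matrices, with row-wise divergence zero: Σ_i ∂_i a_{ij} = 0 for all j. Then A vanishes identically. -/
open Matrix MeasureTheory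

theorem stmt8 (d : ℕ) (hd : 2 ≤ d)
    (A : (Fin d → ℝ) → Matrix (Fin d) (Fin d) ℝ)
    (hsmooth : ∀ i j : Fin d, ContDiff ℝ (⊤ : ℕ∞) (fun x => A x i j))
    (hsupp : HasCompactSupport A)
    (hpos : ∀ x, (A x).PosSemidef)
    (hdiv : ∀ (j : Fin d) (x : Fin d → ℝ),
      ∑ i : Fin d, fderiv ℝ (fun y => A y i j) x (Pi.single i 1) = 0) :
    ∀ x, A x = 0 := by
  have hCs : ∀ i j : Fin d, HasCompactSupport (fun x => A x i j) := fun i j =>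
    hsupp.comp_left (g := fun M : Matrix (Fin d) (Fin d) ℝ => M i j) rfl
  have hcont : ∀ i j : Fin d, Continuous (fun x => A x i j) := fun i j => (hsmooth i j).continuous
  have hdcont : ∀ i j : Fin d, Continuous (fun x => fderiv ℝ (fun y => A y i j) x) :=
    fun i j => (hsmooth i j).continuous_fderiv (by simp)
  have hdcont' : ∀ (i j : Fin d) (v : Fin d → ℝ),
      Continuous (fun x => fderiv ℝ (fun y => A y i j) x v) :=
    fun i j v => (hdcont i j).clm_apply continuous_const
  have hCsd : ∀ (i j : Fin d) (v : Fin d → ℝ),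
      HasCompactSupport (fun x => fderiv ℝ (fun y => A y i j) x v) := by
    intro i j v
    exact ((hCs i j).fderiv ℝ).comp_left
      (g := fun L : (Fin d → ℝ) →L[ℝ] ℝ => L v) rfl
  -- step 1: the integral of each diagonal entry vanishes
  have key : ∀ k : Fin d, (∫ x : Fin d → ℝ, A x k k) = 0 := by
    intro k
    have hfder : ∀ x : Fin d → ℝ,
        fderiv ℝ (fun y : Fin d → ℝ => y k) x = ContinuousLinearMap.proj k := fun x =>
      (ContinuousLinearMap.proj (R := ℝ) (φ := fun _ : Fin d => ℝ) k).hasFDerivAt.fderiv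
    have hIBP : ∀ i : Fin d,
        (∫ x : Fin d → ℝ, (x k) * fderiv ℝ (fun y => A y i k) x (Pi.single i 1))
          = - ∫ x : Fin d → ℝ, ((Pi.single i 1 : Fin d → ℝ) k) * A x i k := by
      intro i
      have h1 : Integrable (fun x : Fin d → ℝ =>
          fderiv ℝ (fun y : Fin d → ℝ => y k) x (Pi.single i 1) * A x i k) volume := by
        simp only [hfder, ContinuousLinearMap.proj_apply]
        exact (Continuous.integrable_of_hasCompactSupport (hcont i k) (hCs i k)).const_mul _
      have h2 : Integrable (fun x : Fin d → ℝ =>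
          (x k) * fderiv ℝ (fun y => A y i k) x (Pi.single i 1)) volume := by
        apply Continuous.integrable_of_hasCompactSupport
        · exact (continuous_apply k).mul (hdcont' i k _)
        · exact (hCsd i k _).mul_left
      have h3 : Integrable (fun x : Fin d → ℝ => (x k) * A x i k) volume := by
        apply Continuous.integrable_of_hasCompactSupport
        · exact (continuous_apply k).mul (hcont i k)
        · exact (hCs i k).mul_left
      have := integral_mul_fderiv_eq_neg_fderiv_mul_of_integrable
        (f := fun x : Fin d → ℝ => x k) (g := fun x => A x i k)
        (v := Pi.single i 1) (μ := volume) h1 h2 h3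
        (fun x _ => (ContinuousLinearMap.proj (R := ℝ) (φ := fun _ : Fin d => ℝ) k).differentiableAt)
        (fun x _ => ((hsmooth i k).differentiable (by simp)) x)
      rw [this]
      congr 1
      refine integral_congr_ae (Filter.Eventually.of_forall fun x => ?_)
      simp [hfder]
    have hsum : ∑ i : Fin d,
        (∫ x : Fin d → ℝ, (x k) * fderiv ℝ (fun y => A y i k) x (Pi.single i 1)) = 0 := by
      rw [← integral_finset_sum]
      · have : ∀ x : Fin d → ℝ,
            (∑ i : Fin d, (x k) * fderiv ℝ (fun y => A y i k) x (Pi.single i 1)) = 0 := by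
          intro x
          rw [← Finset.mul_sum, hdiv k x, mul_zero]
        simp only [this, integral_zero]
      · intro i _
        apply Continuous.integrable_of_hasCompactSupport
        · exact (continuous_apply k).mul (hdcont' i k _)
        · exact (hCsd i k _).mul_left
    rw [Finset.sum_congr rfl (fun i _ => hIBP i)] at hsum
    rw [Finset.sum_neg_distrib, neg_eq_zero] at hsum
    have : ∀ i : Fin d, (∫ x : Fin d → ℝ, ((Pi.single i 1 : Fin d → ℝ) k) * A x i k)
        = if i = k then ∫ x : Fin d → ℝ, A x k k else 0 := by
      intro i
      rcases eq_or_ne i k with rfl | h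
      · simp
      · simp [Pi.single_apply, h]
    simp only [this, Finset.sum_ite_eq, Finset.mem_univ, if_true] at hsum
    simpa using hsum
  -- step 2: diagonal entries are identically zero
  have hdiag : ∀ (x : Fin d → ℝ) (k : Fin d), A x k k = 0 := by
    intro x k
    have hnn : ∀ y : Fin d → ℝ, 0 ≤ A y k k := by
      intro y
      have := (hpos y).dotProduct_mulVec_nonneg (Pi.single k 1)
      simpa [mulVec_single, dotProduct, Pi.single_apply, ite_mul] using this
    have hint : Integrable (fun y : Fin d → ℝ => A y k k) volume :=
      Continuous.integrable_of_hasCompactSupport (hcont k k) (hCs k k)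
    have := (integral_eq_zero_iff_of_nonneg hnn hint).mp (key k)
    have heq : (fun y : Fin d → ℝ => A y k k) = fun _ => (0:ℝ) :=
      ((hcont k k).ae_eq_iff_eq volume continuous_const).mp this
    exact congrFun heq x
  -- step 3: PSD with zero diagonal implies zero
  intro x
  ext i j
  have hcol : A x *ᵥ Pi.single j 1 = 0 := by
    rw [← (hpos x).dotProduct_mulVec_zero_iff]
    simp [mulVec_single, dotProduct, Pi.single_apply, hdiag x j]
  have := congrFun hcol i
  simpa [mulVec_single] using this
end

section
/- (Andréiev identity) For square-integrable real functions φ₁,…,φ_N with respect to a measure μ, det((∫φ_iφ_j dμ)_{1≤i,j≤N}) = (1/N!) ∫⋯∫ (det((φ_i(v_j))_{1≤i,j≤N}))² dμ(v₁)⋯dμ(v_N). -/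
/-!
Expanding `det (φ i (v j))²` over pairs of permutations `(σ, τ)` and integrating coordinatewise,
each term becomes `ε σ ε τ ∏ i, G (σ i) (τ i)` with `G` the Gram matrix. For fixed `σ` the sum
over `τ` is `ε σ · det G`, so each of the `N!` permutations `σ` contributes exactly `det G`.
-/

open Matrix MeasureTheory

namespace Matrix

variable {n R : Type*} [Fintype n] [DecidableEq n] [CommRing R]

theorem det_sq_eq_sum_perm_sum_perm (M : Matrix n n R) :
    M.det ^ 2 = ∑ σ : Equiv.Perm n, ∑ τ : Equiv.Perm n,
      (Equiv.Perm.sign σ : ℤ) * (Equiv.Perm.sign τ : ℤ) * ∏ i, (M (σ i) i * M (τ i) i) := by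
  rw [sq, det_apply', Finset.sum_mul_sum]
  refine Finset.sum_congr rfl fun σ _ => Finset.sum_congr rfl fun τ _ => ?_
  rw [Finset.prod_mul_distrib]
  ring

theorem sum_perm_sign_mul_prod_perm_rows (A : Matrix n n R) (σ : Equiv.Perm n) :
    ∑ τ : Equiv.Perm n, (Equiv.Perm.sign τ : ℤ) * ∏ i, A (σ i) (τ i) =
      (Equiv.Perm.sign σ : ℤ) * A.det := by
  rw [← det_permute, ← det_transpose, det_apply']
  rfl

theorem sum_perm_sum_perm_sign_mul_prod (A : Matrix n n R) :
    ∑ σ : Equiv.Perm n, ∑ τ : Equiv.Perm n,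
      (Equiv.Perm.sign σ : ℤ) * (Equiv.Perm.sign τ : ℤ) * ∏ i, A (σ i) (τ i) =
      (Fintype.card n).factorial * A.det := by
  have hrow : ∀ σ : Equiv.Perm n, ∑ τ : Equiv.Perm n,
      (Equiv.Perm.sign σ : ℤ) * (Equiv.Perm.sign τ : ℤ) * ∏ i, A (σ i) (τ i) = A.det := by
    intro σ
    simp_rw [mul_assoc, ← Finset.mul_sum, sum_perm_sign_mul_prod_perm_rows, ← mul_assoc,
      ← Int.cast_mul, ← Units.val_mul, Int.units_mul_self, Units.val_one, Int.cast_one, one_mul]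
  simp_rw [hrow, Finset.sum_const, Finset.card_univ, Fintype.card_perm, nsmul_eq_mul]

end Matrix

theorem integral_det_sq_eq_factorial_mul_det_gram {X ι : Type*} [MeasurableSpace X]
    (μ : Measure X) [SigmaFinite μ] [Fintype ι] [DecidableEq ι] (φ : ι → X → ℝ)
    (hint : ∀ i j, Integrable (fun v => φ i v * φ j v) μ) :
    ∫ v : ι → X, (Matrix.of fun i j => φ i (v j)).det ^ 2 ∂(Measure.pi fun _ => μ) =
      (Fintype.card ι).factorial * (Matrix.of fun i j => ∫ v, φ i v * φ j v ∂μ).det := by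
  have hprod : ∀ σ τ : Equiv.Perm ι, Integrable
      (fun v : ι → X => ∏ i, (φ (σ i) (v i) * φ (τ i) (v i))) (Measure.pi fun _ => μ) :=
    fun σ τ => Integrable.fintype_prod (f := fun i x => φ (σ i) x * φ (τ i) x)
      fun i => hint (σ i) (τ i)
  simp_rw [det_sq_eq_sum_perm_sum_perm, of_apply]
  rw [← sum_perm_sum_perm_sign_mul_prod, integral_finsetSum _ fun σ _ =>
    integrable_finsetSum _ fun τ _ => (hprod σ τ).const_mul _]
  refine Finset.sum_congr rfl fun σ _ => ?_
  rw [integral_finsetSum _ fun τ _ => (hprod σ τ).const_mul _]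
  refine Finset.sum_congr rfl fun τ _ => ?_
  rw [integral_const_mul,
    integral_fintype_prod_eq_prod (f := fun i x => φ (σ i) x * φ (τ i) x)]
  rfl

theorem stmt11_general {X : Type*} [MeasurableSpace X] (μ : Measure X) [SigmaFinite μ]
    (N : ℕ) (φ : Fin N → X → ℝ)
    (hint : ∀ i j : Fin N, Integrable (fun v => φ i v * φ j v) μ) :
    (Matrix.of fun i j : Fin N => ∫ v, φ i v * φ j v ∂μ).det =
      (1 / (Nat.factorial N) : ℝ) *
        ∫ v : Fin N → X,
          ((Matrix.of fun i j : Fin N => φ i (v j)).det) ^ 2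
          ∂(Measure.pi fun _ : Fin N => μ) := by
  rw [integral_det_sq_eq_factorial_mul_det_gram μ φ hint, Fintype.card_fin, ← mul_assoc,
    one_div_mul_cancel (Nat.cast_ne_zero.mpr N.factorial_ne_zero), one_mul]

theorem stmt11 {X : Type*} [MeasurableSpace X] (μ : Measure X) [SigmaFinite μ]
    (N : ℕ) (hN : 1 ≤ N) (φ : Fin N → X → ℝ)
    (hint : ∀ i j : Fin N, Integrable (fun v => φ i v * φ j v) μ)
    (hmeas : ∀ i, AEStronglyMeasurable (φ i) μ) :
    (Matrix.of fun i j : Fin N => ∫ v, φ i v * φ j v ∂μ).det =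
      (1 / (Nat.factorial N) : ℝ) *
        ∫ v : Fin N → X,
          ((Matrix.of fun i j : Fin N => φ i (v j)).det) ^ 2
          ∂(Measure.pi fun _ : Fin N => μ) :=
  stmt11_general μ N φ hint
end

section
/- The determinant of the relativistic stress-energy tensor equals ρ p^n: for real c > 0, 0 ≤ |v| < c (v ∈ ℝ^n), ρ ≥ 0, p ≥ 0, the (1+n)×(1+n) matrix A with entries A₀₀ = (ρc²+p)/(c²−|v|²) − p/c², A_{0j} = A_{j0} = ((ρc²+p)/(c²−|v|²)) v_j, and A_{jk} = ((ρc²+p)/(c²−|v|²)) v_j v_k + p δ_{jk} satisfies det A = ρ p^n, and A is positive semi-definite. -/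
/-!
With `u = (1, v)` and `g = (ρc² + p)/(c² - |v|²)` the tensor is `diag(-p/c², p, …, p) + g u uᵀ`.
For `p ≠ 0` the matrix determinant lemma gives
`det = (-pⁿ⁺¹/c²)(1 - g (c² - |v|²)/p) = (-pⁿ⁺¹/c²)(-ρc²/p) = ρ pⁿ`, and for `p = 0` the tensor
has rank one. Its quadratic form at `(t, y)` is `g (t + w)² - p t²/c² + p |y|²` with `w = v ⬝ y`;
since `w² ≤ |v|²|y|²` by Cauchy–Schwarz, Sedrakyan's inequality
`t²/c² ≤ (t + w)²/(c² - |v|²) + w²/|v|²` makes the `p`-part nonnegative.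
-/
open Matrix Finset

section DiagonalAddVecMulVec
variable {ι K : Type*} [Fintype ι] [DecidableEq ι]

theorem det_diagonal_add_smul_vecMulVec [Field K] {d : ι → K} (hd : ∀ i, d i ≠ 0) (g : K)
    (u w : ι → K) :
    (diagonal d + g • vecMulVec u w).det = (∏ i, d i) * (1 + g * ∑ i, u i * w i / d i) := by
  have hinv : (diagonal d)⁻¹ = diagonal d⁻¹ :=
    inv_eq_left_inv (by rw [diagonal_mul_diagonal, ← diagonal_one]; simp [inv_mul_cancel₀ (hd _)])
  rw [← smul_vecMulVec, vecMulVec_eq Unit,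
    det_add_replicateCol_mul_replicateRow (by simpa [prod_ne_zero_iff] using hd),
    det_diagonal, hinv, det_unique]
  simp [mul_apply, diagonal_apply, mul_sum, div_eq_mul_inv, mul_comm, mul_assoc]

theorem dotProduct_diagonal_add_smul_vecMulVec_mulVec [CommRing K] (d : ι → K) (g : K)
    (u x : ι → K) :
    x ⬝ᵥ (diagonal d + g • vecMulVec u u) *ᵥ x = ∑ i, d i * x i ^ 2 + g * (u ⬝ᵥ x) ^ 2 := by
  rw [add_mulVec, dotProduct_add, smul_mulVec, vecMulVec_mulVec, dotProduct_smul, dotProduct_smul]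
  simp [dotProduct, mulVec_diagonal, sq, mul_sum, mul_comm, mul_left_comm]

end DiagonalAddVecMulVec

theorem sq_div_le_sq_div_add_of_sq_le_mul {C s t w U : ℝ} (hs : 0 ≤ s) (hsC : s < C) (hU : 0 ≤ U)
    (hw : w ^ 2 ≤ s * U) : t ^ 2 / C ≤ (t + w) ^ 2 / (C - s) + U := by
  rcases hs.eq_or_lt with rfl | hs
  · obtain rfl : w = 0 := by nlinarith
    simpa using hU
  calc t ^ 2 / C = ((t + w) + -w) ^ 2 / ((C - s) + s) := by ring_nf
    _ ≤ (t + w) ^ 2 / (C - s) + (-w) ^ 2 / s := by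
      simpa [Fin.sum_univ_two] using
        sq_sum_div_le_sum_sq_div univ ![t + w, -w] (g := ![C - s, s])
          (by simp [Fin.forall_fin_two, hsC, hs])
    _ ≤ (t + w) ^ 2 / (C - s) + U := by
      rw [neg_sq]
      gcongr
      rwa [div_le_iff₀' hs]

section StressEnergy
variable {n : ℕ} (c : ℝ) (v : Fin n → ℝ) (ρ p : ℝ)

noncomputable def stressEnergy : Matrix (Unit ⊕ Fin n) (Unit ⊕ Fin n) ℝ :=
  diagonal (Sum.elim (fun _ => -(p / c ^ 2)) fun _ => p) +
    ((ρ * c ^ 2 + p) / (c ^ 2 - ∑ i, v i ^ 2)) • vecMulVec (Sum.elim 1 v) (Sum.elim 1 v)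

theorem fromBlocks_eq_stressEnergy {g : ℝ} (hg : g = (ρ * c ^ 2 + p) / (c ^ 2 - ∑ i, v i ^ 2)) :
    fromBlocks (of fun _ _ : Unit => g - p / c ^ 2) (of fun (_ : Unit) (j : Fin n) => g * v j)
      (of fun (i : Fin n) (_ : Unit) => g * v i)
      (of fun i j : Fin n => g * v i * v j + p * (if i = j then 1 else 0)) =
    stressEnergy c v ρ p := by
  subst hg
  ext (i | i) (j | j) <;> simp [stressEnergy, diagonal_apply, vecMulVec_apply] <;> ring

theorem det_stressEnergy (hn : 1 ≤ n) (hc : c ≠ 0) (hv : ∑ i, v i ^ 2 ≠ c ^ 2) :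
    (stressEnergy c v ρ p).det = ρ * p ^ n := by
  rcases eq_or_ne p 0 with rfl | hp
  · have : Nontrivial (Unit ⊕ Fin n) :=
      nontrivial_of_ne (Sum.inl ()) (Sum.inr ⟨0, hn⟩) Sum.inl_ne_inr
    simp [stressEnergy, det_vecMulVec, zero_pow (Nat.one_le_iff_ne_zero.mp hn)]
  have hs : c ^ 2 - ∑ i, v i ^ 2 ≠ 0 := sub_ne_zero.mpr hv.symm
  rw [stressEnergy, det_diagonal_add_smul_vecMulVec (by simp [hp, hc])]
  simp [Fintype.prod_sum_type, Fintype.sum_sum_type, ← sum_div]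
  field_simp
  ring

theorem posSemidef_stressEnergy (hv : ∑ i, v i ^ 2 < c ^ 2) (hρ : 0 ≤ ρ) (hp : 0 ≤ p) :
    (stressEnergy c v ρ p).PosSemidef := by
  refine .of_dotProduct_mulVec_nonneg ?_ fun x => ?_
  · exact (isHermitian_diagonal _).add <| by
      simpa using (posSemidef_vecMulVec_self_star (Sum.elim 1 v)).isHermitian.smul
        (IsSelfAdjoint.all ((ρ * c ^ 2 + p) / (c ^ 2 - ∑ i, v i ^ 2)))
  rw [star_trivial, stressEnergy, dotProduct_diagonal_add_smul_vecMulVec_mulVec]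
  simp only [Fintype.sum_sum_type, dotProduct, univ_unique, sum_singleton, Sum.elim_inl,
    Sum.elim_inr, Pi.one_apply, one_mul, ← mul_sum]
  set s := ∑ i, v i ^ 2
  set t := x (Sum.inl default)
  set w := ∑ i, v i * x (Sum.inr i)
  set U := ∑ i, x (Sum.inr i) ^ 2
  have hs : 0 ≤ s := by positivity
  have hU : 0 ≤ U := by positivity
  have hL := sq_div_le_sq_div_add_of_sq_le_mul (t := t) hs hv hU (sum_mul_sq_le_sq_mul_sq _ _ _)
  calc 0 ≤ ρ * c ^ 2 / (c ^ 2 - s) * (t + w) ^ 2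
        + p * ((t + w) ^ 2 / (c ^ 2 - s) + U - t ^ 2 / c ^ 2) := by
        have := sub_nonneg.mpr hL
        positivity
    _ = _ := by ring

end StressEnergy

theorem stmt14 (n : ℕ) (hn : 1 ≤ n)
    (c : ℝ) (hc : 0 < c) (v : Fin n → ℝ) (hv : ∑ i, v i ^ 2 < c ^ 2)
    (ρ p : ℝ) (hρ : 0 ≤ ρ) (hp : 0 ≤ p)
    (g : ℝ) (hg : g = (ρ * c ^ 2 + p) / (c ^ 2 - ∑ i, v i ^ 2))
    (A : Matrix (Unit ⊕ Fin n) (Unit ⊕ Fin n) ℝ)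
    (hA : A = Matrix.fromBlocks
        (Matrix.of fun _ _ : Unit => g - p / c ^ 2)
        (Matrix.of fun (_ : Unit) (j : Fin n) => g * v j)
        (Matrix.of fun (i : Fin n) (_ : Unit) => g * v i)
        (Matrix.of fun i j : Fin n =>
          g * v i * v j + p * (if i = j then 1 else 0))) :
    A.det = ρ * p ^ n ∧ A.PosSemidef := by
  rw [hA, fromBlocks_eq_stressEnergy c v ρ p hg]
  exact ⟨det_stressEnergy c v ρ p hn hc.ne' hv.ne, posSemidef_stressEnergy c v ρ p hv hρ hp⟩
end

section
/- Let ψ: ℝ^d → ℝ be convex and differentiable, of the form ψ(x) = (1/2)x^T S x + φ(x), with S a symmetric matrix and φ periodic with respect to a lattice Γ. Then for every x ∈ ℝ^d and every γ ∈ Γ, |∇φ(x)·γ| ≤ (1/2) γ^T S γ. -/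
open Matrix

/-!
A differentiable convex function lies above its tangent planes, so
`∇ψ(x)·v ≤ ψ(x + v) - ψ(x)` for all `v`. For a lattice vector `γ` the periodic part cancels in
`ψ(x ± γ) - ψ(x)`, which leaves `±ℓ + ½ γᵀSγ` with `ℓ = ½ (xᵀSγ + γᵀSx)` the derivative of the
quadratic part in direction `γ`. Since `∇φ(x)·γ = ∇ψ(x)·γ - ℓ`, the tangent-plane inequalities
at `±γ` give `|∇φ(x)·γ| ≤ ½ γᵀSγ`.
-/

lemma ConvexOn.le_sub_of_hasFDerivAt {E : Type*} [NormedAddCommGroup E] [NormedSpace ℝ E]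
    {ψ : E → ℝ} {f : E →L[ℝ] ℝ} {x : E} (hconv : ConvexOn ℝ Set.univ ψ)
    (hf : HasFDerivAt ψ f x) (v : E) : f v ≤ ψ (x + v) - ψ x := by
  have hconvLine : ConvexOn ℝ Set.univ (fun t : ℝ => ψ (x + t • v)) := by
    simpa [Function.comp_def, AffineMap.lineMap_apply_module', add_comm] using
      hconv.comp_affineMap (AffineMap.lineMap x (x + v))
  have hderiv : HasDerivAt (fun t : ℝ => ψ (x + t • v)) (f v) 0 := by
    have hf' : HasFDerivAt ψ f (x + (0 : ℝ) • v) := by simpa using hf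
    have hlineDeriv : HasDerivAt (fun t : ℝ => x + t • v) v 0 := by
      simpa using ((hasDerivAt_id (0 : ℝ)).smul_const v).const_add x
    exact hf'.comp_hasDerivAt 0 hlineDeriv
  simpa [slope_def_field] using
    hconvLine.le_slope_of_hasDerivAt (Set.mem_univ 0) (Set.mem_univ 1) one_pos hderiv

lemma ContinuousLinearMap.hasFDerivAt_apply_self {𝕜 E F : Type*} [NontriviallyNormedField 𝕜]
    [NormedAddCommGroup E] [NormedSpace 𝕜 E] [NormedAddCommGroup F] [NormedSpace 𝕜 F]
    (B : E →L[𝕜] E →L[𝕜] F) (x : E) :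
    HasFDerivAt (fun y => B y y) (B x + B.flip x) x := by
  refine (B.hasFDerivAt_of_bilinear (hasFDerivAt_id x) (hasFDerivAt_id x)).congr_fderiv ?_
  ext v
  simp

theorem abs_fderiv_le_of_convexOn_of_periodic {E : Type*} [NormedAddCommGroup E]
    [NormedSpace ℝ E] (B : E →L[ℝ] E →L[ℝ] ℝ) {φ ψ : E → ℝ} {x γ : E}
    (hψ : ∀ y, ψ y = 1 / 2 * B y y + φ y) (hconv : ConvexOn ℝ Set.univ ψ)
    (hdiff : DifferentiableAt ℝ ψ x) (hper : Function.Periodic φ γ) :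
    |fderiv ℝ φ x γ| ≤ 1 / 2 * B γ γ := by
  have hφ : HasFDerivAt φ (fderiv ℝ ψ x - (1 / 2 : ℝ) • (B x + B.flip x)) x := by
    have hφψ : φ = fun y => ψ y - 1 / 2 * B y y := by
      funext y
      rw [hψ]
      ring
    exact hφψ ▸ hdiff.hasFDerivAt.sub ((B.hasFDerivAt_apply_self x).const_mul (1 / 2))
  have hfwd : ψ (x + γ) - ψ x = 1 / 2 * (B x γ + B γ x) + 1 / 2 * B γ γ := by
    rw [hψ, hψ, hper x]
    simp only [map_add, _root_.add_apply]
    ring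
  have hbwd : ψ (x + -γ) - ψ x = -(1 / 2 * (B x γ + B γ x)) + 1 / 2 * B γ γ := by
    rw [hψ, hψ, ← sub_eq_add_neg, hper.sub_eq x]
    simp only [map_sub, _root_.sub_apply]
    ring
  have hup := hconv.le_sub_of_hasFDerivAt hdiff.hasFDerivAt γ
  have hdown := hconv.le_sub_of_hasFDerivAt hdiff.hasFDerivAt (-γ)
  rw [map_neg] at hdown
  rw [hφ.fderiv, abs_le]
  simp only [_root_.sub_apply, _root_.smul_apply,
    _root_.add_apply, ContinuousLinearMap.flip_apply, smul_eq_mul]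
  constructor <;> linarith

noncomputable def Matrix.toContinuousLinearMap₂' {n : Type*} [Fintype n] [DecidableEq n]
    (S : Matrix n n ℝ) : (n → ℝ) →L[ℝ] (n → ℝ) →L[ℝ] ℝ :=
  LinearMap.toContinuousLinearMap
    (LinearMap.toContinuousLinearMap.toLinearMap ∘ₗ Matrix.toLinearMap₂' ℝ S)

@[simp]
lemma Matrix.toContinuousLinearMap₂'_apply {n : Type*} [Fintype n] [DecidableEq n] (S : Matrix n n ℝ)
    (u v : n → ℝ) : S.toContinuousLinearMap₂' u v = u ⬝ᵥ S *ᵥ v := by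
  simp [Matrix.toContinuousLinearMap₂', Matrix.toLinearMap₂'_apply']

theorem stmt18_general (d : ℕ)
    (Γ : AddSubgroup (Fin d → ℝ))
    (S : Matrix (Fin d) (Fin d) ℝ)
    (φ ψ : (Fin d → ℝ) → ℝ)
    (hψ : ∀ x, ψ x = (1 / 2 : ℝ) * (x ⬝ᵥ S.mulVec x) + φ x)
    (hconv : ConvexOn ℝ Set.univ ψ)
    (hdiff : Differentiable ℝ ψ)
    (hper : ∀ γ ∈ Γ, ∀ x, φ (x + γ) = φ x) :
    ∀ x : Fin d → ℝ, ∀ γ ∈ Γ,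
      |fderiv ℝ φ x γ| ≤ (1 / 2 : ℝ) * (γ ⬝ᵥ S.mulVec γ) := by
  intro x γ hγ
  simpa using abs_fderiv_le_of_convexOn_of_periodic S.toContinuousLinearMap₂'
    (by simpa using hψ) hconv (hdiff x) (hper γ hγ)

theorem stmt18 (d : ℕ) (hd : 1 ≤ d)
    (b : Module.Basis (Fin d) ℝ (Fin d → ℝ))
    (Γ : AddSubgroup (Fin d → ℝ))
    (hΓ : (Γ : Set (Fin d → ℝ)) = Set.range (fun k : Fin d → ℤ => ∑ i, (k i : ℝ) • b i))
    (S : Matrix (Fin d) (Fin d) ℝ) (hS : S.IsSymm)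
    (φ ψ : (Fin d → ℝ) → ℝ)
    (hψ : ∀ x, ψ x = (1 / 2 : ℝ) * (x ⬝ᵥ S.mulVec x) + φ x)
    (hconv : ConvexOn ℝ Set.univ ψ)
    (hdiff : Differentiable ℝ ψ)
    (hper : ∀ γ ∈ Γ, ∀ x, φ (x + γ) = φ x) :
    ∀ x : Fin d → ℝ, ∀ γ ∈ Γ,
      |fderiv ℝ φ x γ| ≤ (1 / 2 : ℝ) * (γ ⬝ᵥ S.mulVec γ) :=
  stmt18_general d Γ S φ ψ hψ hconv hdiff hper
end
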